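/- arXiv:2201.06800 — 3 statements merged into one kernel-verified Lean document; each statement's English description precedes it below -/
import Mathlib

section
/- Let u ∈ dom d and p ∈ 𝔥. Suppose u = d m + δ n + o with m ∈ dom d, n ∈ dom δ, o ∈ 𝔥, and m = d r + δ s + t with r ∈ dom d, s ∈ dom δ, t ∈ 𝔥. Set v := d(δ n) + δ s + p and q := o. Then the test pair (v, q) is controlled by (u, p): ‖v‖² + ‖d v‖² + ‖q‖² ≤ (1 + c_p²) ‖u‖² + ‖d u‖² + ‖p‖². -/
/-! Since `d ∘ d = 0` and `d` vanishes on `𝔥`, applying `d` to a decomposition `d r + x + t` only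
sees `x`: thus `d u = d (δ n)` and `d v = d (δ s) = d m`. The decompositions of `u` and `v` are
orthogonal, so their squared norms split by Pythagoras, and Poincaré gives
`‖δ s‖ ≤ c_p ‖d (δ s)‖ = c_p ‖d m‖ ≤ c_p ‖u‖`. -/

open scoped LinearPMap

local notation "⟪" x ", " y "⟫" => @inner ℝ _ _ x y

/-- The harmonic space `𝔥 = {h ∈ dom d ∩ dom δ : d h = 0 and δ h = 0}` associated to a
densely defined operator `d` on a real Hilbert space, where `δ = d†` is the Hilbert adjoint. -/
def Harmonic {W : Type*} [NormedAddCommGroup W] [InnerProductSpace ℝ W] [CompleteSpace W]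
    (d : W →ₗ.[ℝ] W) : Set W :=
  {h | ∃ (h₁ : h ∈ d.domain) (h₂ : h ∈ d†.domain), d ⟨h, h₁⟩ = 0 ∧ d† ⟨h, h₂⟩ = 0}

namespace Harmonic

variable {W : Type*} [NormedAddCommGroup W] [InnerProductSpace ℝ W] [CompleteSpace W]
  (d : W →ₗ.[ℝ] W)

theorem exists_mem_domain_apply_eq_of_eq_add_add
    (hrange : ∀ u : d.domain, d u ∈ d.domain) (hdd : ∀ u : d.domain, d ⟨d u, hrange u⟩ = 0)
    {m r : d.domain} {x t : W} (ht : t ∈ Harmonic d) (hm : (m : W) = d r + x + t) :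
    ∃ hx : x ∈ d.domain, d m = d ⟨x, hx⟩ := by
  obtain ⟨ht₁, -, htd, -⟩ := ht
  have hx : x ∈ d.domain := by
    have hx_eq : x = m - d r - t := by rw [hm]; abel
    rw [hx_eq]
    exact sub_mem (sub_mem m.2 (hrange r)) ht₁
  refine ⟨hx, ?_⟩
  have hm' : m = ⟨d r, hrange r⟩ + ⟨x, hx⟩ + ⟨t, ht₁⟩ := Subtype.ext hm
  rw [hm', d.map_add, d.map_add, hdd, htd, zero_add, add_zero]

theorem norm_sq_add_add
    (horth₁ : ∀ (a : d.domain) (b : d†.domain), ⟪d a, d† b⟫ = 0)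
    (horth₂ : ∀ (a : d.domain) (h : W), h ∈ Harmonic d → ⟪d a, h⟫ = 0)
    (horth₃ : ∀ (b : d†.domain) (h : W), h ∈ Harmonic d → ⟪d† b, h⟫ = 0)
    (a : d.domain) (b : d†.domain) {h : W} (hh : h ∈ Harmonic d) :
    ‖d a + d† b + h‖ ^ 2 = ‖d a‖ ^ 2 + ‖d† b‖ ^ 2 + ‖h‖ ^ 2 := by
  rw [norm_add_sq_real, norm_add_sq_real, inner_add_left, horth₁, horth₂ a h hh, horth₃ b h hh]
  ring

end Harmonic

theorem weak_formulation_test_pair_bound_general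
    {W : Type*} [NormedAddCommGroup W] [InnerProductSpace ℝ W] [CompleteSpace W]
    (d : W →ₗ.[ℝ] W)
    (hrange : ∀ u : d.domain, d u ∈ d.domain)
    (hdd : ∀ u : d.domain, d ⟨d u, hrange u⟩ = 0)
    -- pairwise orthogonality of `range d`, `range δ` and `𝔥`
    (horth₁ : ∀ (a : d.domain) (b : d†.domain), ⟪d a, d† b⟫ = 0)
    (horth₂ : ∀ (a : d.domain) (h : W), h ∈ Harmonic d → ⟪d a, h⟫ = 0)
    (horth₃ : ∀ (b : d†.domain) (h : W), h ∈ Harmonic d → ⟪d† b, h⟫ = 0)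
    -- Poincaré inequality on `range δ ∩ dom d` with constant `c_p > 0`
    (c_p : ℝ)
    (hPoincare : ∀ (b : d†.domain) (hx : (d† b : W) ∈ d.domain),
      ‖(d† b : W)‖ ≤ c_p * ‖d ⟨d† b, hx⟩‖)
    -- the data: `u ∈ dom d`, `p ∈ 𝔥`, and the two Hodge decompositions
    (u m r : d.domain) (n s : d†.domain) (o t p : W)
    (ho : o ∈ Harmonic d) (ht : t ∈ Harmonic d) (hp : p ∈ Harmonic d)
    (hu : (u : W) = d m + d† n + o)
    (hm : (m : W) = d r + d† s + t)
    -- `δ n ∈ dom d` and `v := d(δ n) + δ s + p ∈ dom d`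
    -- (both indeed follow from the decompositions of `u` and `m`)
    (hδn : (d† n : W) ∈ d.domain)
    (hv : d ⟨d† n, hδn⟩ + d† s + p ∈ d.domain) :
    ‖d ⟨d† n, hδn⟩ + d† s + p‖ ^ 2 + ‖d ⟨d ⟨d† n, hδn⟩ + d† s + p, hv⟩‖ ^ 2 + ‖o‖ ^ 2 ≤
      (1 + c_p ^ 2) * ‖(u : W)‖ ^ 2 + ‖d u‖ ^ 2 + ‖p‖ ^ 2 := by
  obtain ⟨hδs, hdm⟩ := Harmonic.exists_mem_domain_apply_eq_of_eq_add_add d hrange hdd ht hm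
  obtain ⟨_, hdu⟩ := Harmonic.exists_mem_domain_apply_eq_of_eq_add_add d hrange hdd ho hu
  obtain ⟨_, hdv⟩ := Harmonic.exists_mem_domain_apply_eq_of_eq_add_add d hrange hdd
    (m := ⟨_, hv⟩) (r := ⟨d† n, hδn⟩) hp rfl
  have hPoincare_s : ‖(d† s : W)‖ ^ 2 ≤ c_p ^ 2 * ‖d m‖ ^ 2 := by
    rw [hdm, ← mul_pow]
    exact pow_le_pow_left₀ (norm_nonneg _) (hPoincare s hδs) 2
  rw [Harmonic.norm_sq_add_add d horth₁ horth₂ horth₃ _ s hp, hdv, ← hdm, hdu, hu,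
    Harmonic.norm_sq_add_add d horth₁ horth₂ horth₃ m n ho]
  nlinarith [sq_nonneg ‖(d† n : W)‖, mul_nonneg (sq_nonneg c_p) (sq_nonneg ‖(d† n : W)‖),
    mul_nonneg (sq_nonneg c_p) (sq_nonneg ‖o‖)]

/-- With `u = d m + δ n + o`, `m = d r + δ s + t`, and the test pair
`v := d(δ n) + δ s + p`, `q := o`, the test pair is controlled by `(u, p)`:
`‖v‖² + ‖d v‖² + ‖q‖² ≤ (1 + c_p²) ‖u‖² + ‖d u‖² + ‖p‖²`. -/
theorem weak_formulation_test_pair_bound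
    {W : Type*} [NormedAddCommGroup W] [InnerProductSpace ℝ W] [CompleteSpace W]
    (d : W →ₗ.[ℝ] W)
    (hdense : Dense (d.domain : Set W)) (hclosed : d.IsClosed)
    (hrange : ∀ u : d.domain, d u ∈ d.domain)
    (hdd : ∀ u : d.domain, d ⟨d u, hrange u⟩ = 0)
    -- pairwise orthogonality of `range d`, `range δ` and `𝔥`
    (horth₁ : ∀ (a : d.domain) (b : d†.domain), ⟪d a, d† b⟫ = 0)
    (horth₂ : ∀ (a : d.domain) (h : W), h ∈ Harmonic d → ⟪d a, h⟫ = 0)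
    (horth₃ : ∀ (b : d†.domain) (h : W), h ∈ Harmonic d → ⟪d† b, h⟫ = 0)
    -- Poincaré inequality on `range δ ∩ dom d` with constant `c_p > 0`
    (c_p : ℝ) (hc_p : 0 < c_p)
    (hPoincare : ∀ (b : d†.domain) (hx : (d† b : W) ∈ d.domain),
      ‖(d† b : W)‖ ≤ c_p * ‖d ⟨d† b, hx⟩‖)
    -- the data: `u ∈ dom d`, `p ∈ 𝔥`, and the two Hodge decompositions
    (u m r : d.domain) (n s : d†.domain) (o t p : W)
    (ho : o ∈ Harmonic d) (ht : t ∈ Harmonic d) (hp : p ∈ Harmonic d)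
    (hu : (u : W) = d m + d† n + o)
    (hm : (m : W) = d r + d† s + t)
    -- `δ n ∈ dom d` and `v := d(δ n) + δ s + p ∈ dom d`
    -- (both indeed follow from the decompositions of `u` and `m`)
    (hδn : (d† n : W) ∈ d.domain)
    (hv : d ⟨d† n, hδn⟩ + d† s + p ∈ d.domain) :
    ‖d ⟨d† n, hδn⟩ + d† s + p‖ ^ 2 + ‖d ⟨d ⟨d† n, hδn⟩ + d† s + p, hv⟩‖ ^ 2 + ‖o‖ ^ 2 ≤
      (1 + c_p ^ 2) * ‖(u : W)‖ ^ 2 + ‖d u‖ ^ 2 + ‖p‖ ^ 2 :=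
  weak_formulation_test_pair_bound_general d hrange hdd horth₁ horth₂ horth₃ c_p hPoincare u m r n s
    o t p ho ht hp hu hm hδn hv
end

section
/- Under the Hodge decomposition hypothesis, the Hodge–Dirac operator is bijective on the orthogonal complement of the harmonic space: for every f ∈ W orthogonal to 𝔥 there exists a unique w ∈ dom d ∩ dom δ with w orthogonal to 𝔥 such that d w + δ w = f. -/
open scoped LinearPMap

local notation "⟪" x ", " y "⟫" => @inner ℝ _ _ x y

/-!
Write `f = d a + δ b`; the harmonic part vanishes because `f ⊥ 𝔥`. Decomposing `a` and `b`
once more, `a = d a₁ + δ b₁ + h₁` and `b = d a₂ + δ b₂ + h₂`, the element `w = δ b₁ + d a₂`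
differs from `a` by an element of `ker d` and from `b` by an element of `ker δ` (because
`d ∘ d = 0`, and hence `δ ∘ δ = 0`: `δ b` is orthogonal to `range d`), so
`d w + δ w = d a + δ b = f`. Uniqueness: if `d v + δ v = 0`, orthogonality of `d v` and `δ v`
forces both to vanish, so `v ∈ 𝔥`.
-/

namespace LinearPMap

section Ker

variable {R E F : Type*} [Ring R] [AddCommGroup E] [Module R E] [AddCommGroup F] [Module R F]

def ker (T : E →ₗ.[R] F) : Submodule R E :=
  (LinearMap.ker T.toFun).map T.domain.subtype

theorem mem_ker {T : E →ₗ.[R] F} {x : E} : x ∈ T.ker ↔ ∃ hx : x ∈ T.domain, T ⟨x, hx⟩ = 0 := by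
  simp [ker, toFun_eq_coe]

theorem exists_apply_eq_of_sub_mem_ker {T : E →ₗ.[R] F} (x : T.domain) {y : E}
    (h : y - x ∈ T.ker) : ∃ hy : y ∈ T.domain, T ⟨y, hy⟩ = T x := by
  obtain ⟨hyx, hT⟩ := mem_ker.1 h
  have hy : y ∈ T.domain := by simpa using add_mem hyx x.2
  exact ⟨hy, sub_eq_zero.1 (by rw [← map_sub]; exact hT)⟩

end Ker

section Adjoint

variable {𝕜 E : Type*} [RCLike 𝕜] [NormedAddCommGroup E] [InnerProductSpace 𝕜 E] [CompleteSpace E]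

theorem mem_ker_adjoint_of_forall_inner_eq_zero {T : E →ₗ.[𝕜] E} (hT : Dense (T.domain : Set E))
    {y : E} (h : ∀ x : T.domain, inner 𝕜 y (T x) = 0) : y ∈ T†.ker := by
  have hx₀ : ∀ x : T.domain, inner 𝕜 (0 : E) x = inner 𝕜 y (T x) := by simp [h]
  have hy : y ∈ T†.domain := mem_adjoint_domain_of_exists y ⟨0, hx₀⟩
  exact mem_ker.2 ⟨hy, adjoint_apply_eq hT ⟨y, hy⟩ hx₀⟩

theorem adjoint_apply_mem_ker_adjoint {T : E →ₗ.[𝕜] E} (hT : Dense (T.domain : Set E))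
    (hTT : ∀ x : T.domain, (T x : E) ∈ T.ker) (y : T†.domain) : (T† y : E) ∈ T†.ker := by
  refine mem_ker_adjoint_of_forall_inner_eq_zero hT fun x ↦ ?_
  obtain ⟨hx, hTx⟩ := mem_ker.1 (hTT x)
  simpa [hTx] using adjoint_isFormalAdjoint hT y ⟨T x, hx⟩

end Adjoint

end LinearPMap

open LinearPMap

section Hodge

variable {W : Type*} [NormedAddCommGroup W] [InnerProductSpace ℝ W] [CompleteSpace W]
  {d : W →ₗ.[ℝ] W}

theorem mem_harmonic_iff {h : W} : h ∈ Harmonic d ↔ h ∈ d.ker ∧ h ∈ d†.ker := by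
  simp only [Harmonic, mem_ker, Set.mem_ofPred_eq]
  exact ⟨fun ⟨h₁, h₂, hd, hδ⟩ ↦ ⟨⟨h₁, hd⟩, ⟨h₂, hδ⟩⟩, fun ⟨⟨h₁, hd⟩, ⟨h₂, hδ⟩⟩ ↦ ⟨h₁, h₂, hd, hδ⟩⟩

theorem eq_zero_of_mem_harmonic_of_orthogonal {v : W} (hv : v ∈ Harmonic d)
    (horth : ∀ h ∈ Harmonic d, ⟪v, h⟫ = 0) : v = 0 :=
  inner_self_eq_zero.1 (horth v hv)

theorem exists_eq_apply_add_adjoint_apply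
    (hHodge : ∀ f : W, ∃ (a : d.domain) (b : d†.domain) (h : W),
      h ∈ Harmonic d ∧ f = d a + d† b + h)
    (horth₂ : ∀ (a : d.domain) (h : W), h ∈ Harmonic d → ⟪d a, h⟫ = 0)
    (horth₃ : ∀ (b : d†.domain) (h : W), h ∈ Harmonic d → ⟪d† b, h⟫ = 0)
    {f : W} (hf : ∀ h ∈ Harmonic d, ⟪f, h⟫ = 0) :
    ∃ (a : d.domain) (b : d†.domain), f = d a + d† b := by
  obtain ⟨a, b, h, hh, rfl⟩ := hHodge f
  have hh_orth : ∀ h' ∈ Harmonic d, ⟪h, h'⟫ = 0 := fun h' hh' ↦ by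
    have := hf h' hh'
    rwa [inner_add_left, inner_add_left, horth₂ a h' hh', horth₃ b h' hh', zero_add,
      zero_add] at this
  exact ⟨a, b, by rw [eq_zero_of_mem_harmonic_of_orthogonal hh hh_orth, add_zero]⟩

theorem exists_apply_eq_and_adjoint_apply_eq (hdense : Dense (d.domain : Set W))
    (hrange : ∀ u : d.domain, d u ∈ d.domain)
    (hdd : ∀ u : d.domain, d ⟨d u, hrange u⟩ = 0)
    (hHodge : ∀ f : W, ∃ (a : d.domain) (b : d†.domain) (h : W),
      h ∈ Harmonic d ∧ f = d a + d† b + h)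
    (horth₂ : ∀ (a : d.domain) (h : W), h ∈ Harmonic d → ⟪d a, h⟫ = 0)
    (horth₃ : ∀ (b : d†.domain) (h : W), h ∈ Harmonic d → ⟪d† b, h⟫ = 0)
    (a : d.domain) (b : d†.domain) :
    ∃ (w : W) (hw₁ : w ∈ d.domain) (hw₂ : w ∈ d†.domain),
      (∀ h ∈ Harmonic d, ⟪w, h⟫ = 0) ∧ d ⟨w, hw₁⟩ = d a ∧ d† ⟨w, hw₂⟩ = d† b := by
  have hd_ker : ∀ u : d.domain, (d u : W) ∈ d.ker := fun u ↦ mem_ker.2 ⟨hrange u, hdd u⟩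
  have hδ_ker := adjoint_apply_mem_ker_adjoint hdense hd_ker
  obtain ⟨a₁, b₁, h₁, hh₁, ha⟩ := hHodge a
  obtain ⟨a₂, b₂, h₂, hh₂, hb⟩ := hHodge b
  have hwa : d† b₁ + d a₂ - a = d a₂ - d a₁ - h₁ := by rw [ha]; abel
  have hwb : d† b₁ + d a₂ - b = d† b₁ - d† b₂ - h₂ := by rw [hb]; abel
  obtain ⟨hw₁, hdw⟩ := exists_apply_eq_of_sub_mem_ker a (y := d† b₁ + d a₂) <| by
    rw [hwa]; exact sub_mem (sub_mem (hd_ker a₂) (hd_ker a₁)) (mem_harmonic_iff.1 hh₁).1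
  obtain ⟨hw₂, hδw⟩ := exists_apply_eq_of_sub_mem_ker b (y := d† b₁ + d a₂) <| by
    rw [hwb]; exact sub_mem (sub_mem (hδ_ker b₁) (hδ_ker b₂)) (mem_harmonic_iff.1 hh₂).2
  refine ⟨_, hw₁, hw₂, fun h hh ↦ ?_, hdw, hδw⟩
  rw [inner_add_left, horth₃ b₁ h hh, horth₂ a₂ h hh, add_zero]

theorem mem_harmonic_of_apply_add_adjoint_apply_eq_zero
    (horth₁ : ∀ (a : d.domain) (b : d†.domain), ⟪d a, d† b⟫ = 0)
    {v : W} (hv₁ : v ∈ d.domain) (hv₂ : v ∈ d†.domain) (hv : d ⟨v, hv₁⟩ + d† ⟨v, hv₂⟩ = 0) :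
    v ∈ Harmonic d := by
  have hδv : d† ⟨v, hv₂⟩ = -d ⟨v, hv₁⟩ := eq_neg_of_add_eq_zero_right hv
  have hdv : d ⟨v, hv₁⟩ = 0 := by
    have := horth₁ ⟨v, hv₁⟩ ⟨v, hv₂⟩
    rw [hδv, inner_neg_right, neg_eq_zero] at this
    exact inner_self_eq_zero.1 this
  exact ⟨hv₁, hv₂, hdv, by rw [hδv, hdv, neg_zero]⟩

end Hodge

theorem hodgeDirac_bijective_on_harmonic_complement_general
    {W : Type*} [NormedAddCommGroup W] [InnerProductSpace ℝ W] [CompleteSpace W]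
    (d : W →ₗ.[ℝ] W)
    (hdense : Dense (d.domain : Set W))
    (hrange : ∀ u : d.domain, d u ∈ d.domain)
    (hdd : ∀ u : d.domain, d ⟨d u, hrange u⟩ = 0)
    -- Hodge decomposition hypothesis: existence of the decomposition
    (hHodge : ∀ f : W, ∃ (a : d.domain) (b : d†.domain) (h : W),
      h ∈ Harmonic d ∧ f = d a + d† b + h)
    -- pairwise orthogonality of `range d`, `range δ` and `𝔥`
    (horth₁ : ∀ (a : d.domain) (b : d†.domain), ⟪d a, d† b⟫ = 0)
    (horth₂ : ∀ (a : d.domain) (h : W), h ∈ Harmonic d → ⟪d a, h⟫ = 0)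
    (horth₃ : ∀ (b : d†.domain) (h : W), h ∈ Harmonic d → ⟪d† b, h⟫ = 0) :
    ∀ f : W, (∀ h ∈ Harmonic d, ⟪f, h⟫ = 0) →
      ∃ (w : W) (hw₁ : w ∈ d.domain) (hw₂ : w ∈ d†.domain),
        (∀ h ∈ Harmonic d, ⟪w, h⟫ = 0) ∧
        d ⟨w, hw₁⟩ + d† ⟨w, hw₂⟩ = f ∧
        ∀ (w' : W) (hw₁' : w' ∈ d.domain) (hw₂' : w' ∈ d†.domain),
          (∀ h ∈ Harmonic d, ⟪w', h⟫ = 0) →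
          d ⟨w', hw₁'⟩ + d† ⟨w', hw₂'⟩ = f → w' = w := by
  intro f hf
  obtain ⟨a, b, rfl⟩ := exists_eq_apply_add_adjoint_apply hHodge horth₂ horth₃ hf
  obtain ⟨w, hw₁, hw₂, hw_orth, hdw, hδw⟩ :=
    exists_apply_eq_and_adjoint_apply_eq hdense hrange hdd hHodge horth₂ horth₃ a b
  refine ⟨w, hw₁, hw₂, hw_orth, by rw [hdw, hδw], fun w' hw₁' hw₂' hw'_orth hw' ↦ ?_⟩
  have hv : d ⟨w' - w, sub_mem hw₁' hw₁⟩ + d† ⟨w' - w, sub_mem hw₂' hw₂⟩ = 0 := by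
    change d (⟨w', hw₁'⟩ - ⟨w, hw₁⟩) + d† (⟨w', hw₂'⟩ - ⟨w, hw₂⟩) = 0
    rw [LinearPMap.map_sub, LinearPMap.map_sub, ← add_sub_add_comm, hw', hdw, hδw, sub_self]
  refine sub_eq_zero.1 (eq_zero_of_mem_harmonic_of_orthogonal
    (mem_harmonic_of_apply_add_adjoint_apply_eq_zero horth₁ _ _ hv) fun h hh ↦ ?_)
  rw [inner_sub_left, hw'_orth h hh, hw_orth h hh, sub_zero]

/-- Under the Hodge decomposition hypothesis, the Hodge–Dirac operator is
bijective on the orthogonal complement of the harmonic space: for every `f ∈ W` orthogonal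
to `𝔥` there exists a unique `w ∈ dom d ∩ dom δ`, orthogonal to `𝔥`, with `d w + δ w = f`. -/
theorem hodgeDirac_bijective_on_harmonic_complement
    {W : Type*} [NormedAddCommGroup W] [InnerProductSpace ℝ W] [CompleteSpace W]
    (d : W →ₗ.[ℝ] W)
    (hdense : Dense (d.domain : Set W)) (hclosed : d.IsClosed)
    (hrange : ∀ u : d.domain, d u ∈ d.domain)
    (hdd : ∀ u : d.domain, d ⟨d u, hrange u⟩ = 0)
    -- Hodge decomposition hypothesis: existence of the decomposition
    (hHodge : ∀ f : W, ∃ (a : d.domain) (b : d†.domain) (h : W),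
      h ∈ Harmonic d ∧ f = d a + d† b + h)
    -- pairwise orthogonality of `range d`, `range δ` and `𝔥`
    (horth₁ : ∀ (a : d.domain) (b : d†.domain), ⟪d a, d† b⟫ = 0)
    (horth₂ : ∀ (a : d.domain) (h : W), h ∈ Harmonic d → ⟪d a, h⟫ = 0)
    (horth₃ : ∀ (b : d†.domain) (h : W), h ∈ Harmonic d → ⟪d† b, h⟫ = 0) :
    ∀ f : W, (∀ h ∈ Harmonic d, ⟪f, h⟫ = 0) →
      ∃ (w : W) (hw₁ : w ∈ d.domain) (hw₂ : w ∈ d†.domain),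
        (∀ h ∈ Harmonic d, ⟪w, h⟫ = 0) ∧
        d ⟨w, hw₁⟩ + d† ⟨w, hw₂⟩ = f ∧
        ∀ (w' : W) (hw₁' : w' ∈ d.domain) (hw₂' : w' ∈ d†.domain),
          (∀ h ∈ Harmonic d, ⟪w', h⟫ = 0) →
          d ⟨w', hw₁'⟩ + d† ⟨w', hw₂'⟩ = f → w' = w :=
  hodgeDirac_bijective_on_harmonic_complement_general d hdense hrange hdd hHodge horth₁ horth₂
    horth₃
end

section
/- A solution of the mixed weak formulation solves the Hodge–Dirac equation up to harmonic projection: if f ∈ W and (u, p) ∈ dom d × 𝔥 satisfy ⟨d u, v⟩ + ⟨u, d v⟩ + ⟨p, v⟩ = ⟨f, v⟩ for all v ∈ dom d, then u ∈ dom δ and d u + δ u = f − p. -/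
open scoped LinearPMap

local notation "⟪" x ", " y "⟫" => @inner ℝ _ _ x y

theorem LinearPMap.exists_mem_adjoint_domain_adjoint_apply_eq
    {𝕜 E F : Type*} [RCLike 𝕜] [NormedAddCommGroup E] [InnerProductSpace 𝕜 E] [CompleteSpace E]
    [NormedAddCommGroup F] [InnerProductSpace 𝕜 F]
    {T : E →ₗ.[𝕜] F} (hT : Dense (T.domain : Set E)) {u : F} {g : E}
    (h : ∀ v : T.domain, inner 𝕜 g (v : E) = inner 𝕜 u (T v)) :
    ∃ hu : u ∈ T†.domain, T† ⟨u, hu⟩ = g :=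
  ⟨mem_adjoint_domain_of_exists u ⟨g, h⟩, adjoint_apply_eq hT _ h⟩

theorem mixed_weak_solution_solves_hodgeDirac_general
    {W : Type*} [NormedAddCommGroup W] [InnerProductSpace ℝ W] [CompleteSpace W]
    (d : W →ₗ.[ℝ] W)
    (hdense : Dense (d.domain : Set W))
    (f : W) (u : d.domain) (p : W)
    (hweak : ∀ v : d.domain,
      ⟪d u, (v : W)⟫ + ⟪(u : W), d v⟫ + ⟪p, (v : W)⟫ = ⟪f, (v : W)⟫) :
    ∃ hu : (u : W) ∈ d†.domain, d u + d† ⟨(u : W), hu⟩ = f - p := by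
  have hadj : ∀ v : d.domain, ⟪f - p - d u, (v : W)⟫ = ⟪(u : W), d v⟫ := fun v => by
    simp only [inner_sub_left]
    linarith [hweak v]
  obtain ⟨hu, hδu⟩ := LinearPMap.exists_mem_adjoint_domain_adjoint_apply_eq hdense hadj
  exact ⟨hu, by rw [hδu]; abel⟩

/-- A solution of the mixed weak formulation solves the Hodge–Dirac
equation up to harmonic projection: if `f ∈ W` and `(u, p) ∈ dom d × 𝔥` satisfy
`⟨d u, v⟩ + ⟨u, d v⟩ + ⟨p, v⟩ = ⟨f, v⟩` for all `v ∈ dom d`, then `u ∈ dom δ` and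
`d u + δ u = f − p`. -/
theorem mixed_weak_solution_solves_hodgeDirac
    {W : Type*} [NormedAddCommGroup W] [InnerProductSpace ℝ W] [CompleteSpace W]
    (d : W →ₗ.[ℝ] W)
    (hdense : Dense (d.domain : Set W)) (hclosed : d.IsClosed)
    (hrange : ∀ u : d.domain, d u ∈ d.domain)
    (hdd : ∀ u : d.domain, d ⟨d u, hrange u⟩ = 0)
    (f : W) (u : d.domain) (p : W) (hp : p ∈ Harmonic d)
    (hweak : ∀ v : d.domain,
      ⟪d u, (v : W)⟫ + ⟪(u : W), d v⟫ + ⟪p, (v : W)⟫ = ⟪f, (v : W)⟫) :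
    ∃ hu : (u : W) ∈ d†.domain, d u + d† ⟨(u : W), hu⟩ = f - p :=
  mixed_weak_solution_solves_hodgeDirac_general d hdense f u p hweak
end
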